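/- arXiv:1811.03035 — 3 statements merged into one kernel-verified Lean document; each statement's English description precedes it below -/
import Mathlib

section
/- Let A be a nonempty finite set and Z_a (a ∈ A) integrable real random variables on a probability space (Ω, 𝓕, ℙ). If the optimal Bayesian simple regret is zero, i.e. E[max_{a∈A} Z_a] = max_{a∈A} E[Z_a], then for every sub-σ-algebra 𝒢 ⊆ 𝓕 the value of computation vanishes: E[max_{a∈A} E[Z_a | 𝒢]] = max_{a∈A} E[Z_a]. -/
/-!
Conditional expectation is monotone and preserves integrals, so `E[max_a E[Z_a | 𝒢]]` is squeezed
between `max_a E[E[Z_a | 𝒢]] = max_a E[Z_a]` and `E[E[max_a Z_a | 𝒢]] = E[max_a Z_a]`.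
Zero simple regret says that these two bounds coincide.
-/

open MeasureTheory

section FiniteSupremum

variable {Ω ι : Type*} {mΩ : MeasurableSpace Ω} {μ : Measure Ω}

theorem MeasureTheory.Integrable.finset_sup' {β : Type*} [NormedAddCommGroup β] [Lattice β]
    [HasSolidNorm β] [IsOrderedAddMonoid β] {s : Finset ι} (hs : s.Nonempty)
    {f : ι → Ω → β} (hf : ∀ i ∈ s, Integrable (f i) μ) : Integrable (s.sup' hs f) μ := by
  induction hs using Finset.Nonempty.cons_induction with
  | singleton i => simpa using hf i (Finset.mem_singleton_self i)
  | cons i t hi ht ih =>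
    rw [Finset.sup'_cons ht]
    exact (hf i (Finset.mem_cons_self i t)).sup (ih fun j hj => hf j (Finset.mem_cons_of_mem hj))

variable [Fintype ι] [Nonempty ι] {f : ι → Ω → ℝ}

theorem MeasureTheory.integrable_iSup (hf : ∀ i, Integrable (f i) μ) :
    Integrable (fun ω => ⨆ i, f i ω) μ := by
  convert Integrable.finset_sup' Finset.univ_nonempty fun i _ => hf i using 1
  ext ω
  rw [Finset.sup'_apply, Finset.sup'_univ_eq_ciSup]

theorem MeasureTheory.iSup_integral_le_integral_iSup (hf : ∀ i, Integrable (f i) μ) :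
    ⨆ i, ∫ ω, f i ω ∂μ ≤ ∫ ω, ⨆ i, f i ω ∂μ :=
  ciSup_le fun i => integral_mono (hf i) (integrable_iSup hf)
    fun ω => le_ciSup (Set.finite_range fun j => f j ω).bddAbove i

variable {m : MeasurableSpace Ω}

theorem MeasureTheory.integral_iSup_condExp_le_integral_iSup (hm : m ≤ mΩ)
    [SigmaFinite (μ.trim hm)] (hf : ∀ i, Integrable (f i) μ) :
    ∫ ω, ⨆ i, μ[f i|m] ω ∂μ ≤ ∫ ω, ⨆ i, f i ω ∂μ := by
  have hsup := integrable_iSup hf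
  have hle_condExp_sup : ∀ i, μ[f i|m] ≤ᵐ[μ] μ[fun ω => ⨆ j, f j ω|m] := fun i =>
    condExp_mono (hf i) hsup <| .of_forall fun ω =>
      le_ciSup (Set.finite_range fun j => f j ω).bddAbove i
  calc ∫ ω, ⨆ i, μ[f i|m] ω ∂μ ≤ ∫ ω, μ[fun ω => ⨆ j, f j ω|m] ω ∂μ := by
        refine integral_mono_ae (integrable_iSup fun _ => integrable_condExp) integrable_condExp ?_
        filter_upwards [ae_all_iff.2 hle_condExp_sup] with ω hω
        exact ciSup_le hω
    _ = ∫ ω, ⨆ i, f i ω ∂μ := integral_condExp hm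

theorem MeasureTheory.iSup_integral_le_integral_iSup_condExp (hm : m ≤ mΩ)
    [SigmaFinite (μ.trim hm)] :
    ⨆ i, ∫ ω, f i ω ∂μ ≤ ∫ ω, ⨆ i, μ[f i|m] ω ∂μ := by
  simpa only [integral_condExp hm] using
    iSup_integral_le_integral_iSup (μ := μ) fun i => integrable_condExp (m := m) (f := f i)

end FiniteSupremum

/-- If the optimal Bayesian simple regret is zero, i.e.
`E[max_a Z_a] = max_a E[Z_a]`, then for every sub-σ-algebra `𝒢 ⊆ 𝓕` the value of computation
vanishes: `E[max_a E[Z_a | 𝒢]] = max_a E[Z_a]`. -/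
theorem voc_stmt7 {Ω : Type*} {mΩ : MeasurableSpace Ω} (μ : Measure Ω)
    [IsProbabilityMeasure μ] {A : Type*} [Fintype A] [Nonempty A] (Z : A → Ω → ℝ)
    (hZ : ∀ a, Integrable (Z a) μ)
    (hzero : (∫ ω, (⨆ a, Z a ω) ∂μ) = ⨆ a, ∫ ω, Z a ω ∂μ) :
    ∀ m : MeasurableSpace Ω, m ≤ mΩ →
      (∫ ω, (⨆ a, (μ[Z a|m]) ω) ∂μ) = ⨆ a, ∫ ω, Z a ω ∂μ := fun _ hm =>
  le_antisymm ((integral_iSup_condExp_le_integral_iSup hm hZ).trans hzero.le)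
    (iSup_integral_le_integral_iSup_condExp hm)
end

section
/- (Dynamic values dominate static values.) In the n-step MDP setting, for every n ∈ ℕ, every state s and every action a, the dynamic value dominates the static value: ψ_n(s,a) := E[Υ_n(s,a)] ≥ φ_n(s,a). -/
open MeasureTheory

/-- Pointwise `n`-step backup of the random frontier values `Z`:
`Υ_0(s,a) = Z(s,a)` and
`Υ_{n+1}(s,a) = Σ_{s'} P(s,a,s')·(R(s,a,s') + γ·max_{a' ∈ A_{s'}} Υ_n(s',a'))`. -/
noncomputable def Upsilon {Ω S A : Type*} [Fintype S] (As : S → Finset A)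
    (hAs : ∀ s, (As s).Nonempty) (P R : S → A → S → ℝ) (γ : ℝ)
    (Z : S → A → Ω → ℝ) : ℕ → S → A → Ω → ℝ
  | 0 => fun s a ω => Z s a ω
  | n + 1 => fun s a ω => ∑ s' : S, P s a s' *
      (R s a s' + γ * (As s').sup' (hAs s') fun a' => Upsilon As hAs P R γ Z n s' a' ω)

/-- Deterministic `n`-step backup of a base value function: used for the static value `φ_n`
(base `(s,a) ↦ E[Z(s,a)]`) and, pointwise in `ω`, for the conditional static value `φ_n^𝒢`
(base `(s,a) ↦ E[Z(s,a)|𝒢](ω)`). -/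
noncomputable def stepValue {S A : Type*} [Fintype S] (As : S → Finset A)
    (hAs : ∀ s, (As s).Nonempty) (P R : S → A → S → ℝ) (γ : ℝ)
    (base : S → A → ℝ) : ℕ → S → A → ℝ
  | 0 => base
  | n + 1 => fun s a => ∑ s' : S, P s a s' *
      (R s a s' + γ * (As s').sup' (hAs s') fun a' => stepValue As hAs P R γ base n s' a')

/-!
Taking expectations commutes with the affine, nonnegatively weighted part of a backup step,
while moving it inside the maximum over actions can only decrease the value, since
`max_i 𝔼[X_i] ≤ 𝔼[max_i X_i]`. Induction on `n` then gives `φ_n ≤ ψ_n`, using monotonicity of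
the backup step.
-/

section FinsetSup

variable {α ι : Type*} {mα : MeasurableSpace α} {μ : Measure α} {s : Finset ι}

theorem integrable_finset_sup' {β : Type*} [NormedAddCommGroup β] [Lattice β]
    [HasSolidNorm β] [IsOrderedAddMonoid β] (hs : s.Nonempty) {f : ι → α → β}
    (hf : ∀ i ∈ s, Integrable (f i) μ) :
    Integrable (fun x => s.sup' hs fun i => f i x) μ := by
  convert Finset.sup'_induction (p := (Integrable · μ)) hs f (fun _ h₁ _ h₂ => h₁.sup h₂)
    hf using 1
  exact funext fun x => (Finset.sup'_apply hs f x).symm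

theorem finset_sup'_integral_le_integral_sup' (hs : s.Nonempty) {f : ι → α → ℝ}
    (hf : ∀ i ∈ s, Integrable (f i) μ) :
    (s.sup' hs fun i => ∫ x, f i x ∂μ) ≤ ∫ x, s.sup' hs (fun i => f i x) ∂μ :=
  Finset.sup'_le hs _ fun i hi =>
    integral_mono (hf i hi) (integrable_finset_sup' hs hf) fun x => Finset.le_sup' (f · x) hi

end FinsetSup

section Backup

variable {Ω S A : Type*} {mΩ : MeasurableSpace Ω} {μ : Measure Ω} [Fintype S]
  {As : S → Finset A} {hAs : ∀ s, (As s).Nonempty} {P R : S → A → S → ℝ} {γ : ℝ}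
  {Z : S → A → Ω → ℝ}

theorem integrable_upsilon [IsFiniteMeasure μ] (hZ : ∀ s a, Integrable (Z s a) μ)
    (n : ℕ) (s : S) (a : A) : Integrable (Upsilon As hAs P R γ Z n s a) μ := by
  induction n generalizing s a with
  | zero => exact hZ s a
  | succ n ih =>
    have hsup (s' : S) :=
      integrable_finset_sup' (μ := μ) (hAs s') fun a' _ => ih s' a'
    exact integrable_finsetSum _ fun s' _ =>
      ((integrable_const _).add ((hsup s').const_mul γ)).const_mul _

theorem integral_upsilon_succ [IsProbabilityMeasure μ] (hZ : ∀ s a, Integrable (Z s a) μ)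
    (n : ℕ) (s : S) (a : A) :
    ∫ ω, Upsilon As hAs P R γ Z (n + 1) s a ω ∂μ = ∑ s', P s a s' *
      (R s a s' + γ * ∫ ω, (As s').sup' (hAs s') (Upsilon As hAs P R γ Z n s' · ω) ∂μ) := by
  have hsup (s' : S) :
      Integrable (fun ω => (As s').sup' (hAs s') (Upsilon As hAs P R γ Z n s' · ω)) μ :=
    integrable_finset_sup' _ fun a' _ => integrable_upsilon hZ n s' a'
  have hterm (s' : S) : Integrable (fun ω => P s a s' *
      (R s a s' + γ * (As s').sup' (hAs s') (Upsilon As hAs P R γ Z n s' · ω))) μ :=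
    ((integrable_const _).add ((hsup s').const_mul γ)).const_mul _
  rw [Upsilon, integral_finsetSum _ fun s' _ => hterm s']
  refine Finset.sum_congr rfl fun s' _ => ?_
  rw [integral_const_mul, integral_add (integrable_const _) ((hsup s').const_mul γ),
    integral_const_mul, integral_const, probReal_univ, one_smul]

end Backup

theorem voc_stmt12_general {Ω S A : Type*} {mΩ : MeasurableSpace Ω} (μ : Measure Ω)
    [IsProbabilityMeasure μ] [Fintype S]
    (As : S → Finset A) (hAs : ∀ s, (As s).Nonempty) (P R : S → A → S → ℝ)
    (hP : ∀ s a s', 0 ≤ P s a s')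
    (γ : ℝ) (hγ : 0 ≤ γ) (Z : S → A → Ω → ℝ) (hZ : ∀ s a, Integrable (Z s a) μ) :
    ∀ (n : ℕ) (s : S) (a : A),
      stepValue As hAs P R γ (fun s' a' => ∫ ω, Z s' a' ω ∂μ) n s a ≤
        ∫ ω, Upsilon As hAs P R γ Z n s a ω ∂μ := by
  intro n
  induction n with
  | zero => exact fun s a => le_rfl
  | succ n ih =>
    intro s a
    rw [stepValue, integral_upsilon_succ hZ]
    refine Finset.sum_le_sum fun s' _ => mul_le_mul_of_nonneg_left ?_ (hP s a s')
    gcongr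
    calc (As s').sup' (hAs s') (stepValue As hAs P R γ (fun s' a' => ∫ ω, Z s' a' ω ∂μ) n s' ·)
        ≤ (As s').sup' (hAs s') (∫ ω, Upsilon As hAs P R γ Z n s' · ω ∂μ) :=
          Finset.sup'_mono_fun fun a' _ => ih s' a'
      _ ≤ ∫ ω, (As s').sup' (hAs s') (Upsilon As hAs P R γ Z n s' · ω) ∂μ :=
          finset_sup'_integral_le_integral_sup' _ fun a' _ => integrable_upsilon hZ n s' a'

/-- Dynamic values dominate static values: for every `n`, `s`, `a`,
`ψ_n(s,a) = E[Υ_n(s,a)] ≥ φ_n(s,a)`. -/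
theorem voc_stmt12 {Ω S A : Type*} {mΩ : MeasurableSpace Ω} (μ : Measure Ω)
    [IsProbabilityMeasure μ] [Fintype S] [Nonempty S] [Fintype A] [Nonempty A]
    (As : S → Finset A) (hAs : ∀ s, (As s).Nonempty) (P R : S → A → S → ℝ)
    (hP : ∀ s a s', 0 ≤ P s a s') (hPsum : ∀ s a, ∑ s', P s a s' = 1)
    (γ : ℝ) (hγ : 0 ≤ γ) (Z : S → A → Ω → ℝ) (hZ : ∀ s a, Integrable (Z s a) μ) :
    ∀ (n : ℕ) (s : S) (a : A),
      stepValue As hAs P R γ (fun s' a' => ∫ ω, Z s' a' ω ∂μ) n s a ≤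
        ∫ ω, Upsilon As hAs P R γ Z n s a ω ∂μ :=
  voc_stmt12_general (mΩ := mΩ) μ As hAs P R hP γ hγ Z hZ
end

section
/- (VOC dominates VOC' for static values in MDPs.) In the n-step MDP setting with a sub-σ-algebra 𝒢 ⊆ 𝓕, fix a state s and let a* ∈ A_s maximize a ↦ φ_n(s,a) over A_s. Then E[max_{a∈A_s} φ_n^𝒢(s,a)] − max_{a∈A_s} φ_n(s,a) ≥ E[max_{a∈A_s} φ_n^𝒢(s,a) − φ_n^𝒢(s,a*)]; that is, VOC(𝒢; φ_n, s) ≥ VOC'(𝒢; φ_n, s). -/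
open MeasureTheory

/-!
Both `max` and the Bellman backup with nonnegative weights `P` and discount `γ` are monotone and
convex, so Jensen's inequality propagates through the recursion: the static value built from the
means `E[Z]` is at most the mean of the conditional static value. Since `E[E[Z|𝒢]] = E[Z]`, this
gives `φ_n(s,a*) ≤ E[φ_n^𝒢(s,a*)]`, and `φ_n(s,a*) = max_a φ_n(s,a)` by the choice of `a*`.
-/

theorem MeasureTheory.Integrable.finset_sup'_s18 {Ω ι : Type*} {mΩ : MeasurableSpace Ω}
    {μ : Measure Ω} {t : Finset ι} (ht : t.Nonempty) {f : ι → Ω → ℝ}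
    (hf : ∀ i ∈ t, Integrable (f i) μ) :
    Integrable (fun ω => t.sup' ht fun i => f i ω) μ := by
  induction ht using Finset.Nonempty.cons_induction with
  | singleton i => simpa using hf i (by simp)
  | cons i t hi ht ih =>
    simp only [Finset.sup'_cons ht]
    exact (hf i (by simp)).sup (ih fun j hj => hf j (Finset.mem_cons_of_mem hj))

theorem MeasureTheory.finset_sup'_integral_le {Ω ι : Type*} {mΩ : MeasurableSpace Ω}
    {μ : Measure Ω} {t : Finset ι} (ht : t.Nonempty) {f : ι → Ω → ℝ}
    (hf : ∀ i ∈ t, Integrable (f i) μ) :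
    (t.sup' ht fun i => ∫ ω, f i ω ∂μ) ≤ ∫ ω, t.sup' ht (fun i => f i ω) ∂μ :=
  Finset.sup'_le _ _ fun i hi =>
    integral_mono (hf i hi) (Integrable.finset_sup'_s18 ht hf) fun ω => Finset.le_sup' (f · ω) hi

section StepValue

variable {Ω S A : Type*} {mΩ : MeasurableSpace Ω} {μ : Measure Ω} [Fintype S]
  (As : S → Finset A) (hAs : ∀ s, (As s).Nonempty) (P R : S → A → S → ℝ) (γ : ℝ)
  {g : S → A → Ω → ℝ}

theorem integrable_stepValue [IsFiniteMeasure μ] (hg : ∀ s a, Integrable (g s a) μ)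
    (n : ℕ) (s : S) (a : A) :
    Integrable (fun ω => stepValue As hAs P R γ (fun s' a' => g s' a' ω) n s a) μ := by
  induction n generalizing s a with
  | zero => exact hg s a
  | succ n ih =>
    refine integrable_finsetSum _ fun s' _ => ?_
    exact ((integrable_const _).add
      ((Integrable.finset_sup'_s18 (hAs s') fun a' _ => ih s' a').const_mul γ)).const_mul _

theorem integral_stepValue_succ [IsProbabilityMeasure μ] (hg : ∀ s a, Integrable (g s a) μ)
    (n : ℕ) (s : S) (a : A) :
    ∫ ω, stepValue As hAs P R γ (fun s' a' => g s' a' ω) (n + 1) s a ∂μ =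
      ∑ s' : S, P s a s' * (R s a s' + γ * ∫ ω, (As s').sup' (hAs s')
        (fun a' => stepValue As hAs P R γ (fun s'' a'' => g s'' a'' ω) n s' a') ∂μ) := by
  have hsup : ∀ s' : S, Integrable (fun ω => (As s').sup' (hAs s') fun a' =>
      stepValue As hAs P R γ (fun s'' a'' => g s'' a'' ω) n s' a') μ := fun s' =>
    Integrable.finset_sup'_s18 (hAs s') fun a' _ => integrable_stepValue As hAs P R γ hg n s' a'
  simp only [stepValue]
  rw [integral_finsetSum]
  · refine Finset.sum_congr rfl fun s' _ => ?_
    rw [integral_const_mul, integral_add (integrable_const _) ((hsup s').const_mul γ),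
      integral_const, integral_const_mul, probReal_univ, one_smul]
  · exact fun s' _ => ((integrable_const _).add ((hsup s').const_mul γ)).const_mul _

theorem stepValue_integral_le_integral_stepValue [IsProbabilityMeasure μ]
    (hP : ∀ s a s', 0 ≤ P s a s') (hγ : 0 ≤ γ)
    (hg : ∀ s a, Integrable (g s a) μ) (n : ℕ) (s : S) (a : A) :
    stepValue As hAs P R γ (fun s' a' => ∫ ω, g s' a' ω ∂μ) n s a ≤
      ∫ ω, stepValue As hAs P R γ (fun s' a' => g s' a' ω) n s a ∂μ := by
  induction n generalizing s a with
  | zero => exact le_rfl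
  | succ n ih =>
    rw [integral_stepValue_succ As hAs P R γ hg]
    refine Finset.sum_le_sum fun s' _ => ?_
    have hPnonneg := hP s a s'
    calc _ ≤ P s a s' * (R s a s' + γ * (As s').sup' (hAs s') fun a' =>
            ∫ ω, stepValue As hAs P R γ (fun s'' a'' => g s'' a'' ω) n s' a' ∂μ) := by
          gcongr with a' _
          exact ih s' a'
      _ ≤ _ := by
          gcongr
          exact finset_sup'_integral_le (hAs s') fun a' _ =>
            integrable_stepValue As hAs P R γ hg n s' a'

end StepValue

theorem voc_stmt18_general {Ω S A : Type*} {mΩ : MeasurableSpace Ω} (μ : Measure Ω)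
    [IsProbabilityMeasure μ] [Fintype S]
    (As : S → Finset A) (hAs : ∀ s, (As s).Nonempty) (P R : S → A → S → ℝ)
    (hP : ∀ s a s', 0 ≤ P s a s')
    (γ : ℝ) (hγ : 0 ≤ γ) (Z : S → A → Ω → ℝ)
    (m : MeasurableSpace Ω) (hm : m ≤ mΩ) (n : ℕ) (s : S)
    (astar : A) (hastar_mem : astar ∈ As s)
    (hastar : ∀ a ∈ As s,
      stepValue As hAs P R γ (fun s' a' => ∫ ω, Z s' a' ω ∂μ) n s a ≤
        stepValue As hAs P R γ (fun s' a' => ∫ ω, Z s' a' ω ∂μ) n s astar) :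
    (∫ ω, (((As s).sup' (hAs s) fun a =>
          stepValue As hAs P R γ (fun s' a' => (μ[Z s' a'|m]) ω) n s a) -
        stepValue As hAs P R γ (fun s' a' => (μ[Z s' a'|m]) ω) n s astar) ∂μ) ≤
      (∫ ω, (As s).sup' (hAs s)
          (fun a => stepValue As hAs P R γ (fun s' a' => (μ[Z s' a'|m]) ω) n s a) ∂μ) -
        (As s).sup' (hAs s)
          fun a => stepValue As hAs P R γ (fun s' a' => ∫ ω, Z s' a' ω ∂μ) n s a := by
  have hcondExp : ∀ s a, Integrable (μ[Z s a|m]) μ := fun _ _ => integrable_condExp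
  have hmean :
      (fun s' a' => ∫ ω, Z s' a' ω ∂μ) = fun s' a' => ∫ ω, (μ[Z s' a'|m]) ω ∂μ := by
    ext s' a'
    exact (integral_condExp hm).symm
  have hmax : ((As s).sup' (hAs s)
      fun a => stepValue As hAs P R γ (fun s' a' => ∫ ω, Z s' a' ω ∂μ) n s a) =
      stepValue As hAs P R γ (fun s' a' => ∫ ω, Z s' a' ω ∂μ) n s astar :=
    le_antisymm (Finset.sup'_le _ _ hastar) (Finset.le_sup' _ hastar_mem)
  rw [integral_sub (Integrable.finset_sup'_s18 (hAs s) fun a _ =>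
      integrable_stepValue As hAs P R γ hcondExp n s a)
    (integrable_stepValue As hAs P R γ hcondExp n s astar), hmax, hmean]
  gcongr
  exact stepValue_integral_le_integral_stepValue As hAs P R γ hP hγ hcondExp n s astar

/-- VOC dominates VOC' for static values in MDPs: if `a* ∈ A_s` maximizes
`a ↦ φ_n(s,a)` over `A_s`, then
`E[max_{a ∈ A_s} φ_n^𝒢(s,a)] − max_{a ∈ A_s} φ_n(s,a)
  ≥ E[max_{a ∈ A_s} φ_n^𝒢(s,a) − φ_n^𝒢(s,a*)]`. -/
theorem voc_stmt18 {Ω S A : Type*} {mΩ : MeasurableSpace Ω} (μ : Measure Ω)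
    [IsProbabilityMeasure μ] [Fintype S] [Nonempty S] [Fintype A] [Nonempty A]
    (As : S → Finset A) (hAs : ∀ s, (As s).Nonempty) (P R : S → A → S → ℝ)
    (hP : ∀ s a s', 0 ≤ P s a s') (hPsum : ∀ s a, ∑ s', P s a s' = 1)
    (γ : ℝ) (hγ : 0 ≤ γ) (Z : S → A → Ω → ℝ) (hZ : ∀ s a, Integrable (Z s a) μ)
    (m : MeasurableSpace Ω) (hm : m ≤ mΩ) (n : ℕ) (s : S)
    (astar : A) (hastar_mem : astar ∈ As s)
    (hastar : ∀ a ∈ As s,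
      stepValue As hAs P R γ (fun s' a' => ∫ ω, Z s' a' ω ∂μ) n s a ≤
        stepValue As hAs P R γ (fun s' a' => ∫ ω, Z s' a' ω ∂μ) n s astar) :
    (∫ ω, (((As s).sup' (hAs s) fun a =>
          stepValue As hAs P R γ (fun s' a' => (μ[Z s' a'|m]) ω) n s a) -
        stepValue As hAs P R γ (fun s' a' => (μ[Z s' a'|m]) ω) n s astar) ∂μ) ≤
      (∫ ω, (As s).sup' (hAs s)
          (fun a => stepValue As hAs P R γ (fun s' a' => (μ[Z s' a'|m]) ω) n s a) ∂μ) -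
        (As s).sup' (hAs s)
          fun a => stepValue As hAs P R γ (fun s' a' => ∫ ω, Z s' a' ω ∂μ) n s a :=
  voc_stmt18_general μ As hAs P R hP γ hγ Z m hm n s astar hastar_mem hastar
end
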